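/- Let G ∈ ℝ^{2c×2c} be symmetric positive definite, let H ∈ ℝ^{2c×2c} be symmetric of signature (c,c), and let D be the diagonal matrix with c diagonal entries equal to 1 followed by c entries equal to −1. Then there exists a matrix B ∈ ℝ^{2c×2c} with G = BᵀB and H = BᵀDB if and only if (G H^{−1})² = I. -/

import Mathlib

/-!
Write `G = XᵀX` with `X` invertible and `H = Xᵀ K X`. Then `G H⁻¹ = Xᵀ K⁻¹ Xᵀ⁻¹`, so
`(G H⁻¹)² = 1` says exactly that `K` is an involution; this gives the forward direction
(take `X = B`, `K = D`). Conversely `K = (Y X⁻¹)ᵀ D (Y X⁻¹)` is symmetric, so an orthogonal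
`U` diagonalises it, with eigenvalues `±1`. By Sylvester's law of inertia these eigenvalues
occur `c` times each, so after permuting the columns of `U` we get an orthogonal `W` with
`K = W D Wᵀ`, and `B = Wᵀ X` works.
-/

open Matrix

/-- The diagonal matrix with `c` entries `1` followed by `c` entries `-1`. -/
def Dmat (c : ℕ) : Matrix (Fin (2 * c)) (Fin (2 * c)) ℝ :=
  Matrix.diagonal (fun i => if (i : ℕ) < c then 1 else -1)

section CommRing

variable {n R : Type*} [Fintype n] [DecidableEq n] [CommRing R]

theorem sum_mul_sq_eq_of_diagonal_eq {ε d : n → R} {N : Matrix n n R}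
    (h : diagonal ε = Nᵀ * diagonal d * N) (x : n → R) :
    ∑ i, ε i * x i ^ 2 = ∑ j, d j * (N *ᵥ x) j ^ 2 := by
  have := congrArg (fun A => x ⬝ᵥ (A *ᵥ x)) h
  simp only [← mulVec_mulVec] at this
  rw [dotProduct_mulVec x Nᵀ, vecMul_transpose] at this
  simp only [mulVec_diagonal, dotProduct] at this
  convert this using 2 <;> ring

theorem diagonal_mul_self_eq_one_iff [NoZeroDivisors R] {d : n → R} :
    diagonal d * diagonal d = 1 ↔ ∀ i, d i = 1 ∨ d i = -1 := by
  rw [diagonal_mul_diagonal, ← diagonal_one, diagonal_eq_diagonal_iff]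
  exact forall_congr' fun _ => mul_self_eq_one_iff

theorem mul_diagonal_comp_mul_transpose (U : Matrix n n R) (d : n → R) (σ : Equiv.Perm n) :
    U * diagonal (d ∘ σ) * Uᵀ =
      U.submatrix id σ.symm * diagonal d * (U.submatrix id σ.symm)ᵀ := by
  ext i j
  simp only [mul_apply, diagonal_apply, transpose_apply, submatrix_apply, id, mul_ite, mul_zero,
    Finset.sum_ite_eq', Finset.mem_univ, if_true, Function.comp]
  exact (Equiv.sum_comp σ.symm (fun k => U i k * d (σ k) * U j k)).symm.trans (by simp)

theorem submatrix_symm_mul_transpose {U : Matrix n n R} (hU : U * Uᵀ = 1) (σ : Equiv.Perm n) :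
    U.submatrix id σ.symm * (U.submatrix id σ.symm)ᵀ = 1 := by
  rw [transpose_submatrix, submatrix_mul_equiv, hU, submatrix_id_id]

theorem isUnit_transpose_mul_mul_iff {J : Matrix n n R} (hJ : IsUnit J) (M : Matrix n n R) :
    IsUnit (Mᵀ * J * M) ↔ IsUnit M := by
  simp only [isUnit_iff_isUnit_det, det_transpose, IsUnit.mul_iff] at hJ ⊢
  tauto

theorem transpose_mul_self_mul_inv_sq_eq_one_iff {B J : Matrix n n R} (hB : IsUnit B)
    (hJ : IsUnit J) :
    Bᵀ * B * (Bᵀ * J * B)⁻¹ * (Bᵀ * B * (Bᵀ * J * B)⁻¹) = 1 ↔ J * J = 1 := by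
  obtain ⟨a, ha⟩ := (isUnit_transpose B).mpr hB
  obtain ⟨b, rfl⟩ := hB
  obtain ⟨j, rfl⟩ := hJ
  have key : a * b * (a * j * b)⁻¹ * (a * b * (a * j * b)⁻¹) = a * (j * j)⁻¹ * a⁻¹ := by group
  rw [← ha]
  simp only [← Units.val_mul, ← coe_units_inv, Units.val_eq_one]
  rw [key, conj_eq_one_iff, inv_eq_one]

end CommRing

section Inertia

variable {n 𝕜 : Type*} [Fintype n] [DecidableEq n] [Field 𝕜] [LinearOrder 𝕜]
  [IsStrictOrderedRing 𝕜]

/-- Sylvester's law of inertia, one half: the form is positive definite on the span of the `e_i`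
with `0 < ε i`, so `x ↦ (N x)` restricted to `{j | 0 < d j}` is injective there. -/
theorem card_pos_le_of_diagonal_eq {ε d : n → 𝕜} {N : Matrix n n 𝕜}
    (h : diagonal ε = Nᵀ * diagonal d * N) :
    Fintype.card {i // 0 < ε i} ≤ Fintype.card {j // 0 < d j} := by
  let T := LinearMap.funLeft 𝕜 𝕜 (Subtype.val : {j // 0 < d j} → n) ∘ₗ N.mulVecLin ∘ₗ
    Function.ExtendByZero.linearMap 𝕜 (Subtype.val : {i // 0 < ε i} → n)
  suffices hT : Function.Injective T by
    simpa using LinearMap.finrank_le_finrank_of_injective hT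
  rw [← LinearMap.ker_eq_bot, LinearMap.ker_eq_bot']
  intro y hy
  set x := Function.extend Subtype.val y 0
  have hNx : ∀ j, 0 < d j → (N *ᵥ x) j = 0 := fun j hj => congrFun hy ⟨j, hj⟩
  have hx_of_nonpos : ∀ i, ¬ 0 < ε i → x i = 0 := fun i hi =>
    Function.extend_apply' _ _ _ (by rintro ⟨⟨j, hj⟩, rfl⟩; exact hi hj)
  have hterm : ∀ i, 0 ≤ ε i * x i ^ 2 := fun i => by
    by_cases hi : 0 < ε i
    · positivity
    · simp [hx_of_nonpos i hi]
  have hsum : ∑ i, ε i * x i ^ 2 ≤ 0 := by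
    rw [sum_mul_sq_eq_of_diagonal_eq h]
    refine Finset.sum_nonpos fun j _ => ?_
    by_cases hj : 0 < d j
    · simp [hNx j hj]
    · exact mul_nonpos_of_nonpos_of_nonneg (not_lt.mp hj) (sq_nonneg _)
  have hzero := (Finset.sum_eq_zero_iff_of_nonneg fun i _ => hterm i).mp
    (le_antisymm hsum (Finset.sum_nonneg fun i _ => hterm i))
  funext i
  simpa [i.2.ne', x, Subtype.val_injective.extend_apply] using hzero i (Finset.mem_univ _)

theorem card_pos_eq_of_diagonal_eq {ε d : n → 𝕜} (hε : ∀ i, ε i = 1 ∨ ε i = -1)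
    (hd : ∀ j, d j = 1 ∨ d j = -1) {N : Matrix n n 𝕜} (h : diagonal ε = Nᵀ * diagonal d * N) :
    Fintype.card {i // 0 < ε i} = Fintype.card {j // 0 < d j} ∧
      Fintype.card {i // ¬ 0 < ε i} = Fintype.card {j // ¬ 0 < d j} := by
  have neg_pos_iff {a : 𝕜} (ha : a = 1 ∨ a = -1) : 0 < -a ↔ ¬ 0 < a := by
    rcases ha with rfl | rfl <;> norm_num
  have hle := card_pos_le_of_diagonal_eq h
  have hle' : Fintype.card {i // ¬ 0 < ε i} ≤ Fintype.card {j // ¬ 0 < d j} := by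
    have h' : diagonal (fun i => -ε i) = Nᵀ * diagonal (fun j => -d j) * N := by
      rw [← diagonal_neg, ← diagonal_neg, h, mul_neg, neg_mul]
    simpa only [neg_pos_iff (hε _), neg_pos_iff (hd _)] using card_pos_le_of_diagonal_eq h'
  have := Fintype.card_subtype_compl (fun i => 0 < ε i)
  have := Fintype.card_subtype_compl (fun j => 0 < d j)
  have := Fintype.card_subtype_le (fun i => 0 < ε i)
  have := Fintype.card_subtype_le (fun j => 0 < d j)
  omega

omit [DecidableEq n] in
theorem exists_perm_comp_eq_of_card_pos_eq {ε d : n → 𝕜} (hε : ∀ i, ε i = 1 ∨ ε i = -1)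
    (hd : ∀ j, d j = 1 ∨ d j = -1)
    (hpos : Fintype.card {i // 0 < ε i} = Fintype.card {j // 0 < d j})
    (hneg : Fintype.card {i // ¬ 0 < ε i} = Fintype.card {j // ¬ 0 < d j}) :
    ∃ σ : Equiv.Perm n, d ∘ σ = ε := by
  set σ := Equiv.subtypeCongr (Fintype.equivOfCardEq hpos) (Fintype.equivOfCardEq hneg)
  have hσ : ∀ i, 0 < d (σ i) ↔ 0 < ε i := fun i => by
    by_cases hi : 0 < ε i
    · simpa [σ, Equiv.subtypeCongr, hi] using (Fintype.equivOfCardEq hpos ⟨i, hi⟩).2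
    · simpa [σ, Equiv.subtypeCongr, hi] using (Fintype.equivOfCardEq hneg ⟨i, hi⟩).2
  refine ⟨σ, funext fun i => ?_⟩
  have := hσ i
  rcases hε i with h | h <;> rcases hd (σ i) with h' | h' <;>
    simp only [Function.comp_apply, h, h'] at this ⊢ <;> norm_num at this

end Inertia

section Real

variable {n : Type*} [Fintype n] [DecidableEq n]

theorem isHermitian_transpose_mul_diagonal_mul (M : Matrix n n ℝ) (d : n → ℝ) :
    (Mᵀ * diagonal d * M).IsHermitian := by
  simp [IsHermitian, Matrix.mul_assoc]

theorem Matrix.IsHermitian.exists_orthogonal_eq_mul_diagonal_mul_transpose {K : Matrix n n ℝ}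
    (hK : K.IsHermitian) :
    ∃ (U : Matrix n n ℝ) (ε : n → ℝ), U * Uᵀ = 1 ∧ Uᵀ * U = 1 ∧ K = U * diagonal ε * Uᵀ := by
  refine ⟨hK.eigenvectorUnitary, hK.eigenvalues, ?_, ?_, ?_⟩
  · simpa [star_eq_conjTranspose] using Unitary.coe_mul_star_self hK.eigenvectorUnitary
  · simpa [star_eq_conjTranspose] using Unitary.coe_star_mul_self hK.eigenvectorUnitary
  · simpa [Unitary.conjStarAlgAut_apply, star_eq_conjTranspose] using hK.spectral_theorem

theorem exists_orthogonal_eq_mul_diagonal_mul_transpose_of_mul_self_eq_one {d : n → ℝ}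
    (hd : ∀ j, d j = 1 ∨ d j = -1) {K M : Matrix n n ℝ} (hKM : K = Mᵀ * diagonal d * M)
    (hK : K * K = 1) :
    ∃ W : Matrix n n ℝ, W * Wᵀ = 1 ∧ K = W * diagonal d * Wᵀ := by
  obtain ⟨U, ε, hUUt, hUtU, hKU⟩ := (hKM ▸ isHermitian_transpose_mul_diagonal_mul M d :
    K.IsHermitian).exists_orthogonal_eq_mul_diagonal_mul_transpose
  have hε_eq : diagonal ε = Uᵀ * K * U := by
    rw [hKU, ← Matrix.mul_assoc, ← Matrix.mul_assoc, hUtU, Matrix.one_mul, Matrix.mul_assoc,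
      hUtU, Matrix.mul_one]
  have hε : ∀ i, ε i = 1 ∨ ε i = -1 := by
    refine diagonal_mul_self_eq_one_iff.mp ?_
    calc diagonal ε * diagonal ε = Uᵀ * (K * (U * Uᵀ) * K) * U := by
          simp only [hε_eq, Matrix.mul_assoc]
      _ = 1 := by rw [hUUt, Matrix.mul_one, hK, Matrix.mul_one, hUtU]
  have hcong : diagonal ε = (M * U)ᵀ * diagonal d * (M * U) := by
    rw [hε_eq, hKM, transpose_mul]
    simp only [Matrix.mul_assoc]
  obtain ⟨hpos, hneg⟩ := card_pos_eq_of_diagonal_eq hε hd hcong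
  obtain ⟨σ, hσ⟩ := exists_perm_comp_eq_of_card_pos_eq hε hd hpos hneg
  refine ⟨U.submatrix id σ.symm, submatrix_symm_mul_transpose hUUt σ, ?_⟩
  rw [← mul_diagonal_comp_mul_transpose, hσ, hKU]

open MatrixOrder in
theorem Matrix.PosDef.exists_isUnit_eq_transpose_mul_self {G : Matrix n n ℝ} (hG : G.PosDef) :
    ∃ X : Matrix n n ℝ, IsUnit X ∧ G = Xᵀ * X := by
  have hsq : CFC.sqrt G * CFC.sqrt G = G := CFC.sqrt_mul_sqrt_self G hG.posSemidef.nonneg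
  have hsymm : (CFC.sqrt G)ᵀ = CFC.sqrt G := by
    simpa [conjTranspose_eq_transpose_of_trivial] using (CFC.sqrt_nonneg G).posSemidef.1.eq
  refine ⟨CFC.sqrt G, ?_, by rw [hsymm, hsq]⟩
  exact isUnit_of_mul_isUnit_left (hsq ▸ hG.isUnit)

end Real

theorem exists_Dmat_eq_diagonal (c : ℕ) :
    ∃ d : Fin (2 * c) → ℝ, (∀ i, d i = 1 ∨ d i = -1) ∧ Dmat c = diagonal d :=
  ⟨_, fun i => by split_ifs <;> simp, rfl⟩

theorem stmt8 (c : ℕ) (G H : Matrix (Fin (2 * c)) (Fin (2 * c)) ℝ)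
    (hG : G.PosDef)
    (hsig : ∃ Y : Matrix (Fin (2 * c)) (Fin (2 * c)) ℝ, IsUnit Y ∧ H = Yᵀ * Dmat c * Y) :
    (∃ B : Matrix (Fin (2 * c)) (Fin (2 * c)) ℝ, G = Bᵀ * B ∧ H = Bᵀ * Dmat c * B) ↔
      (G * H⁻¹) * (G * H⁻¹) = 1 := by
  obtain ⟨d, hd, hD⟩ := exists_Dmat_eq_diagonal c
  obtain ⟨Y, hY, rfl⟩ := hsig
  have hdd : diagonal d * diagonal d = 1 := diagonal_mul_self_eq_one_iff.mpr hd
  have hd_unit : IsUnit (diagonal d) := isUnit_of_mul_isUnit_left (hdd ▸ isUnit_one)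
  rw [hD]
  constructor
  · rintro ⟨B, rfl, hB⟩
    have hB_unit : IsUnit B := (isUnit_transpose_mul_mul_iff hd_unit B).mp
      (hB ▸ (isUnit_transpose_mul_mul_iff hd_unit Y).mpr hY)
    rwa [hB, transpose_mul_self_mul_inv_sq_eq_one_iff hB_unit hd_unit]
  · intro h
    obtain ⟨X, hX, rfl⟩ := hG.exists_isUnit_eq_transpose_mul_self
    set M := Y * X⁻¹
    have hMX : M * X = Y := nonsing_inv_mul_cancel_right X Y ((isUnit_iff_isUnit_det X).mp hX)
    have hM : IsUnit M := hY.mul (isUnit_nonsing_inv_iff.mpr hX)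
    have hH : Yᵀ * diagonal d * Y = Xᵀ * (Mᵀ * diagonal d * M) * X := by
      simp only [← hMX, transpose_mul, Matrix.mul_assoc]
    rw [hH, transpose_mul_self_mul_inv_sq_eq_one_iff hX
      ((isUnit_transpose_mul_mul_iff hd_unit M).mpr hM)] at h
    obtain ⟨W, hW, hKW⟩ :=
      exists_orthogonal_eq_mul_diagonal_mul_transpose_of_mul_self_eq_one hd rfl h
    refine ⟨Wᵀ * X, ?_, ?_⟩
    · rw [transpose_mul, transpose_transpose, Matrix.mul_assoc, ← Matrix.mul_assoc W, hW,
        Matrix.one_mul]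
    · rw [hH, hKW]
      simp only [transpose_mul, transpose_transpose, Matrix.mul_assoc]
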